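/- Let A be a commutative integral domain, M a nonzero ideal of A, and Â = [[A, M],[M, A]] the subring of M₂(A) of matrices with off-diagonal entries in M. Then Â satisfies SPSP: for every ascending chain T₁ ⊆ T₂ ⊆ ⋯ of semiprime two-sided ideals of Â, the union ⋃_n T_n is a semiprime two-sided ideal of Â. -/
import Mathlib


/-- A two-sided ideal `P` of a ring `R` is semiprime if `aRa ⊆ P` implies `a ∈ P`. -/
def IsSemiprimeTSI {R : Type*} [Ring R] (P : TwoSidedIdeal R) : Prop :=
  ∀ a : R, (∀ r : R, a * r * a ∈ P) → a ∈ P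

/-- The ring `Â = [[A, M],[M, A]]` of matrices over `A` with off-diagonal entries in `M`. -/
def hatA (A : Type*) [CommRing A] (M : Ideal A) : Subring (Matrix (Fin 2) (Fin 2) A) where
  carrier := {X | X 0 1 ∈ M ∧ X 1 0 ∈ M}
  zero_mem' := by simp
  one_mem' := by simp [Matrix.one_apply]
  add_mem' := fun hX hY => ⟨M.add_mem hX.1 hY.1, M.add_mem hX.2 hY.2⟩
  neg_mem' := fun hX => ⟨M.neg_mem hX.1, M.neg_mem hX.2⟩
  mul_mem' := by
    rintro X Y ⟨hX1, hX2⟩ ⟨hY1, hY2⟩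
    constructor
    · show (X * Y) 0 1 ∈ M
      rw [Matrix.mul_apply, Fin.sum_univ_two]
      exact M.add_mem (M.mul_mem_left _ hY1) (M.mul_mem_right _ hX1)
    · show (X * Y) 1 0 ∈ M
      rw [Matrix.mul_apply, Fin.sum_univ_two]
      exact M.add_mem (M.mul_mem_right _ hX2) (M.mul_mem_left _ hY2)

namespace SPSPaux

variable {A : Type*} [CommRing A] {M : Ideal A}

def mk2 (M : Ideal A) (a b c d : A) (hb : b ∈ M) (hc : c ∈ M) : ↥(hatA A M) :=
  ⟨!![a, b; c, d], ⟨by simpa using hb, by simpa using hc⟩⟩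

@[simp] lemma coe_mul2 (x y : ↥(hatA A M)) :
    ((x * y : ↥(hatA A M)) : Matrix (Fin 2) (Fin 2) A)
      = (x : Matrix (Fin 2) (Fin 2) A) * y := rfl

@[simp] lemma coe_add2 (x y : ↥(hatA A M)) :
    ((x + y : ↥(hatA A M)) : Matrix (Fin 2) (Fin 2) A)
      = (x : Matrix (Fin 2) (Fin 2) A) + y := rfl

lemma ext2 {x y : ↥(hatA A M)}
    (h : ∀ i j, (x : Matrix (Fin 2) (Fin 2) A) i j = (y : Matrix (Fin 2) (Fin 2) A) i j) :
    x = y := Subtype.ext (by ext i j; exact h i j)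

/-- `I₀`-radical lemma: `D₀(γ²) ∈ P → D₀ γ ∈ P` for semiprime `P`. -/
lemma lemD0 {P : TwoSidedIdeal ↥(hatA A M)} (hP : IsSemiprimeTSI P) (γ : A)
    (h : mk2 M (γ*γ) 0 0 0 M.zero_mem M.zero_mem ∈ P) :
    mk2 M γ 0 0 0 M.zero_mem M.zero_mem ∈ P := by
  apply hP
  intro r
  have e : mk2 M γ 0 0 0 M.zero_mem M.zero_mem * r * mk2 M γ 0 0 0 M.zero_mem M.zero_mem
      = mk2 M (γ*γ) 0 0 0 M.zero_mem M.zero_mem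
        * mk2 M ((r : Matrix (Fin 2) (Fin 2) A) 0 0) 0 0 0 M.zero_mem M.zero_mem := by
    apply ext2; intro i j
    fin_cases i <;> fin_cases j <;>
      simp [mk2, Matrix.mul_apply, Fin.sum_univ_two, Matrix.vecMul, dotProduct, Matrix.vecHead, Matrix.vecTail] <;> ring
  rw [e]
  exact P.mul_mem_right _ _ h

lemma lemD1 {P : TwoSidedIdeal ↥(hatA A M)} (hP : IsSemiprimeTSI P) (γ : A)
    (h : mk2 M 0 0 0 (γ*γ) M.zero_mem M.zero_mem ∈ P) :
    mk2 M 0 0 0 γ M.zero_mem M.zero_mem ∈ P := by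
  apply hP
  intro r
  have e : mk2 M 0 0 0 γ M.zero_mem M.zero_mem * r * mk2 M 0 0 0 γ M.zero_mem M.zero_mem
      = mk2 M 0 0 0 (γ*γ) M.zero_mem M.zero_mem
        * mk2 M 0 0 0 ((r : Matrix (Fin 2) (Fin 2) A) 1 1) M.zero_mem M.zero_mem := by
    apply ext2; intro i j
    fin_cases i <;> fin_cases j <;>
      simp [mk2, Matrix.mul_apply, Fin.sum_univ_two, Matrix.vecMul, dotProduct, Matrix.vecHead, Matrix.vecTail] <;> ring
  rw [e]
  exact P.mul_mem_right _ _ h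

/-- Cube-root lemma for the upper corner: `O₀(m³) ∈ P → O₀ m ∈ P` for semiprime `P`. -/
lemma lemO0 {P : TwoSidedIdeal ↥(hatA A M)} (hP : IsSemiprimeTSI P) (m : A) (hm : m ∈ M)
    (h : mk2 M 0 (m*m*m) 0 0 (M.mul_mem_right _ (M.mul_mem_right _ hm)) M.zero_mem ∈ P) :
    mk2 M 0 m 0 0 hm M.zero_mem ∈ P := by
  apply hP
  intro r
  obtain ⟨r, hr01, hr10⟩ := r
  set q : A := r 1 0 with hq
  have hqM : q ∈ M := hr10
  have e : (mk2 M 0 m 0 0 hm M.zero_mem) * ⟨r, hr01, hr10⟩ * mk2 M 0 m 0 0 hm M.zero_mem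
      = mk2 M 0 (m*q*m) 0 0 (M.mul_mem_right _ (M.mul_mem_left _ hqM)) M.zero_mem := by
    apply ext2; intro i j
    fin_cases i <;> fin_cases j <;>
      simp [mk2, Matrix.mul_apply, Fin.sum_univ_two, Matrix.vecMul, dotProduct, Matrix.vecHead, Matrix.vecTail] <;> ring
  rw [e]
  -- now show O₀(m*q*m) ∈ P, again by semiprimeness
  apply hP
  intro s
  obtain ⟨s, hs01, hs10⟩ := s
  set t : A := s 1 0 with ht
  have htM : t ∈ M := hs10
  have e2 : (mk2 M 0 (m*q*m) 0 0 (M.mul_mem_right _ (M.mul_mem_left _ hqM)) M.zero_mem)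
        * ⟨s, hs01, hs10⟩
        * mk2 M 0 (m*q*m) 0 0 (M.mul_mem_right _ (M.mul_mem_left _ hqM)) M.zero_mem
      = mk2 M 0 (m*m*m) 0 0 (M.mul_mem_right _ (M.mul_mem_right _ hm)) M.zero_mem
        * mk2 M 0 0 0 (m*q*q*t) M.zero_mem M.zero_mem := by
    apply ext2; intro i j
    fin_cases i <;> fin_cases j <;>
      simp [mk2, Matrix.mul_apply, Fin.sum_univ_two, Matrix.vecMul, dotProduct, Matrix.vecHead, Matrix.vecTail] <;> ring
  rw [e2]
  exact P.mul_mem_right _ _ h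

/-- Cube-root lemma for the lower corner. -/
lemma lemO1 {P : TwoSidedIdeal ↥(hatA A M)} (hP : IsSemiprimeTSI P) (m : A) (hm : m ∈ M)
    (h : mk2 M 0 0 (m*m*m) 0 M.zero_mem (M.mul_mem_right _ (M.mul_mem_right _ hm)) ∈ P) :
    mk2 M 0 0 m 0 M.zero_mem hm ∈ P := by
  apply hP
  intro r
  obtain ⟨r, hr01, hr10⟩ := r
  set q : A := r 0 1 with hq
  have hqM : q ∈ M := hr01
  have e : (mk2 M 0 0 m 0 M.zero_mem hm) * ⟨r, hr01, hr10⟩ * mk2 M 0 0 m 0 M.zero_mem hm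
      = mk2 M 0 0 (m*q*m) 0 M.zero_mem (M.mul_mem_right _ (M.mul_mem_left _ hqM)) := by
    apply ext2; intro i j
    fin_cases i <;> fin_cases j <;>
      simp [mk2, Matrix.mul_apply, Fin.sum_univ_two, Matrix.vecMul, dotProduct, Matrix.vecHead, Matrix.vecTail] <;> ring
  rw [e]
  apply hP
  intro s
  obtain ⟨s, hs01, hs10⟩ := s
  set t : A := s 0 1 with ht
  have htM : t ∈ M := hs01
  have e2 : (mk2 M 0 0 (m*q*m) 0 M.zero_mem (M.mul_mem_right _ (M.mul_mem_left _ hqM)))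
        * ⟨s, hs01, hs10⟩
        * mk2 M 0 0 (m*q*m) 0 M.zero_mem (M.mul_mem_right _ (M.mul_mem_left _ hqM))
      = mk2 M 0 0 (m*m*m) 0 M.zero_mem (M.mul_mem_right _ (M.mul_mem_right _ hm))
        * mk2 M (m*q*q*t) 0 0 0 M.zero_mem M.zero_mem := by
    apply ext2; intro i j
    fin_cases i <;> fin_cases j <;>
      simp [mk2, Matrix.mul_apply, Fin.sum_univ_two, Matrix.vecMul, dotProduct, Matrix.vecHead, Matrix.vecTail] <;> ring
  rw [e2]
  exact P.mul_mem_right _ _ h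

end SPSPaux

open SPSPaux in
/-- `Â = [[A, M],[M, A]]` satisfies SPSP: the union of every ascending chain of semiprime
two-sided ideals of `Â` is a semiprime two-sided ideal. -/
theorem stmt_15 (A : Type*) [CommRing A] [IsDomain A] (M : Ideal A) (hM : M ≠ ⊥)
    (T : ℕ → TwoSidedIdeal ↥(hatA A M)) (hchain : Monotone T)
    (hsp : ∀ n, IsSemiprimeTSI (T n)) :
    ∃ U : TwoSidedIdeal ↥(hatA A M),
      (U : Set ↥(hatA A M)) = (⋃ n, (T n : Set ↥(hatA A M))) ∧ IsSemiprimeTSI U := by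
  classical
  set S : Set ↥(hatA A M) := ⋃ n, (T n : Set ↥(hatA A M)) with hS
  have memS : ∀ x, x ∈ S ↔ ∃ n, x ∈ T n := by
    intro x; simp [hS, Set.mem_iUnion]
  refine ⟨TwoSidedIdeal.mk' S
    ((memS 0).2 ⟨0, (T 0).zero_mem⟩)
    (fun {x y} hx hy => by
      obtain ⟨i, hi⟩ := (memS x).1 hx
      obtain ⟨j, hj⟩ := (memS y).1 hy
      exact (memS _).2 ⟨max i j, (T _).add_mem (hchain (le_max_left i j) hi)
        (hchain (le_max_right i j) hj)⟩)
    (fun {x} hx => by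
      obtain ⟨i, hi⟩ := (memS x).1 hx
      exact (memS _).2 ⟨i, (T i).neg_mem hi⟩)
    (fun {x y} hy => by
      obtain ⟨i, hi⟩ := (memS y).1 hy
      exact (memS _).2 ⟨i, (T i).mul_mem_left x y hi⟩)
    (fun {x y} hx => by
      obtain ⟨i, hi⟩ := (memS x).1 hx
      exact (memS _).2 ⟨i, (T i).mul_mem_right x y hi⟩), ?_, ?_⟩
  · exact TwoSidedIdeal.coe_mk' _ _ _ _ _ _
  · -- semiprimeness of the union
    intro a ha
    rw [TwoSidedIdeal.mem_mk', memS]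
    have haU : ∀ r : ↥(hatA A M), ∃ n, a * r * a ∈ T n := fun r => by
      have := ha r
      rw [TwoSidedIdeal.mem_mk', memS] at this
      exact this
    obtain ⟨X, hX01, hX10⟩ := a
    set α : A := X 0 0 with hα
    set m : A := X 0 1 with hm
    set μ : A := X 1 0 with hμ
    set β : A := X 1 1 with hβ
    set a' : ↥(hatA A M) := ⟨X, hX01, hX10⟩ with ha'
    -- the four "corner" pieces of a
    set E00 : ↥(hatA A M) := mk2 M 1 0 0 0 M.zero_mem M.zero_mem
    set E11 : ↥(hatA A M) := mk2 M 0 0 0 1 M.zero_mem M.zero_mem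
    -- step 1 : D₀ α
    obtain ⟨n1, h1⟩ := haU E00
    have d1 : mk2 M (α*α) 0 0 0 M.zero_mem M.zero_mem ∈ T n1 := by
      have e : E00 * (a' * E00 * a') * E00 = mk2 M (α*α) 0 0 0 M.zero_mem M.zero_mem := by
        apply ext2; intro i j
        fin_cases i <;> fin_cases j <;>
          simp [mk2, ha', E00, Matrix.mul_apply, Fin.sum_univ_two, Matrix.vecMul, dotProduct, Matrix.vecHead, Matrix.vecTail, hα, hm, hμ, hβ] <;> ring
      rw [← e]
      exact (T n1).mul_mem_right _ _ ((T n1).mul_mem_left _ _ h1)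
    have hD0 : mk2 M α 0 0 0 M.zero_mem M.zero_mem ∈ T n1 := lemD0 (hsp n1) α d1
    -- step 2 : D₁ β
    obtain ⟨n2, h2⟩ := haU E11
    have d2 : mk2 M 0 0 0 (β*β) M.zero_mem M.zero_mem ∈ T n2 := by
      have e : E11 * (a' * E11 * a') * E11 = mk2 M 0 0 0 (β*β) M.zero_mem M.zero_mem := by
        apply ext2; intro i j
        fin_cases i <;> fin_cases j <;>
          simp [mk2, ha', E00, E11, Matrix.mul_apply, Fin.sum_univ_two, Matrix.vecMul, dotProduct, Matrix.vecHead, Matrix.vecTail, hα, hm, hμ, hβ] <;> ring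
      rw [← e]
      exact (T n2).mul_mem_right _ _ ((T n2).mul_mem_left _ _ h2)
    have hD1 : mk2 M 0 0 0 β M.zero_mem M.zero_mem ∈ T n2 := lemD1 (hsp n2) β d2
    -- step 3 : O₀ m, using r = [[0,0],[m,0]]
    obtain ⟨n3, h3⟩ := haU (mk2 M 0 0 m 0 M.zero_mem hX01)
    have d3 : mk2 M 0 (m*m*m) 0 0 (M.mul_mem_right _ (M.mul_mem_right _ hX01)) M.zero_mem
        ∈ T n3 := by
      have e : E00 * (a' * (mk2 M 0 0 m 0 M.zero_mem hX01) * a') * E11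
          = mk2 M 0 (m*m*m) 0 0 (M.mul_mem_right _ (M.mul_mem_right _ hX01)) M.zero_mem := by
        apply ext2; intro i j
        fin_cases i <;> fin_cases j <;>
          simp [mk2, ha', E00, E11, Matrix.mul_apply, Fin.sum_univ_two, Matrix.vecMul, dotProduct, Matrix.vecHead, Matrix.vecTail, hα, hm, hμ, hβ] <;> ring
      rw [← e]
      exact (T n3).mul_mem_right _ _ ((T n3).mul_mem_left _ _ h3)
    have hO0 : mk2 M 0 m 0 0 hX01 M.zero_mem ∈ T n3 := lemO0 (hsp n3) m hX01 d3
    -- step 4 : O₁ μ, using r = [[0,μ],[0,0]]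
    obtain ⟨n4, h4⟩ := haU (mk2 M 0 μ 0 0 hX10 M.zero_mem)
    have d4 : mk2 M 0 0 (μ*μ*μ) 0 M.zero_mem (M.mul_mem_right _ (M.mul_mem_right _ hX10))
        ∈ T n4 := by
      have e : E11 * (a' * (mk2 M 0 μ 0 0 hX10 M.zero_mem) * a') * E00
          = mk2 M 0 0 (μ*μ*μ) 0 M.zero_mem (M.mul_mem_right _ (M.mul_mem_right _ hX10)) := by
        apply ext2; intro i j
        fin_cases i <;> fin_cases j <;>
          simp [mk2, ha', E00, E11, Matrix.mul_apply, Fin.sum_univ_two, Matrix.vecMul, dotProduct, Matrix.vecHead, Matrix.vecTail, hα, hm, hμ, hβ] <;> ring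
      rw [← e]
      exact (T n4).mul_mem_right _ _ ((T n4).mul_mem_left _ _ h4)
    have hO1 : mk2 M 0 0 μ 0 M.zero_mem hX10 ∈ T n4 := lemO1 (hsp n4) μ hX10 d4
    -- combine
    refine ⟨max (max n1 n2) (max n3 n4), ?_⟩
    have edecomp : a' = mk2 M α 0 0 0 M.zero_mem M.zero_mem
        + mk2 M 0 m 0 0 hX01 M.zero_mem
        + mk2 M 0 0 μ 0 M.zero_mem hX10
        + mk2 M 0 0 0 β M.zero_mem M.zero_mem := by
      apply ext2; intro i j
      fin_cases i <;> fin_cases j <;>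
        simp [mk2, ha', hα, hm, hμ, hβ]
    rw [edecomp]
    have l1 : n1 ≤ max (max n1 n2) (max n3 n4) := le_max_of_le_left (le_max_left _ _)
    have l2 : n2 ≤ max (max n1 n2) (max n3 n4) := le_max_of_le_left (le_max_right _ _)
    have l3 : n3 ≤ max (max n1 n2) (max n3 n4) := le_max_of_le_right (le_max_left _ _)
    have l4 : n4 ≤ max (max n1 n2) (max n3 n4) := le_max_of_le_right (le_max_right _ _)
    exact (T _).add_mem ((T _).add_mem ((T _).add_mem (hchain l1 hD0) (hchain l3 hO0))
      (hchain l4 hO1)) (hchain l2 hD1)
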